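/- arXiv:2005.11585 — 3 statements merged into one kernel-verified Lean document; each statement's English description precedes it below -/
import Mathlib

section
/- Let n = 2k be an even positive integer and let S be a subset of the cyclic group Z_n (written additively) that is closed under negation and does not contain 0. Let Γ be the circulant graph Cay(Z_n, S), i.e., the simple graph with vertex set Z_n in which u and v are adjacent if and only if v - u ∈ S. Then the automorphism group of Γ contains a subgroup isomorphic to the dihedral group D_k of order 2k that acts regularly (transitively and freely) on the vertex set; consequently Γ is a Cayley graph on D_k. -/
/-!
Let `D_k` act on `ℤ/2k` by rotations `x ↦ x - 2i` and reflections `x ↦ 1 + 2i - x`. Both kinds of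
map send a difference `v - u` to `±(v - u)`, so they preserve adjacency in any circulant graph with
symmetric connection set. Rotations preserve parity and move a point by every even amount exactly
once; reflections reverse parity, which is where the offset `1` matters: no reflection has a fixed
point and every pair of points of opposite parity is swapped by exactly one of them. Hence the
action is regular and faithful, and its image is the required subgroup.
-/

/-- The Cayley graph `Cay(G, S)` of an additive group `G` with negation-closed,
zero-free connection set `S`: vertices `u` and `v` are adjacent iff `v - u ∈ S`. -/
def addCayleyGraph {G : Type*} [AddGroup G] (S : Set G) (hsym : ∀ s ∈ S, -s ∈ S)
    (hid : (0 : G) ∉ S) : SimpleGraph G where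
  Adj u v := v - u ∈ S
  symm := by
    constructor
    intro u v h
    simpa [neg_sub] using hsym _ h
  loopless := by
    constructor
    intro u h
    exact hid (by simpa using h)

theorem addCayleyGraph_adj {G : Type*} [AddGroup G] {S : Set G} {hsym : ∀ s ∈ S, -s ∈ S}
    {hid : (0 : G) ∉ S} {u v : G} : (addCayleyGraph S hsym hid).Adj u v ↔ v - u ∈ S :=
  Iff.rfl

theorem MonoidHom.injective_of_eq_one_of_apply_eq_self {Γ X : Type*} [Group Γ]
    (φ : Γ →* Equiv.Perm X) (hfree : ∀ g x, φ g x = x → g = 1) (x : X) :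
    Function.Injective φ :=
  (injective_iff_map_eq_one φ).2 fun g hg => hfree g x (by rw [hg]; rfl)

theorem MonoidHom.existsUnique_range_apply_eq {Γ X : Type*} [Group Γ] (φ : Γ →* Equiv.Perm X)
    (hfree : ∀ g x, φ g x = x → g = 1) (htrans : ∀ x y, ∃ g, φ g x = y) (x y : X) :
    ∃! p : φ.range, (p : Equiv.Perm X) x = y := by
  obtain ⟨g, hg⟩ := htrans x y
  refine ⟨⟨φ g, g, rfl⟩, hg, ?_⟩
  rintro ⟨_, g', rfl⟩ hg'
  have hfix : φ (g⁻¹ * g') x = x := by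
    rw [map_mul, map_inv, Equiv.Perm.mul_apply, hg']
    exact Equiv.Perm.inv_eq_iff_eq.mpr hg.symm
  rw [inv_mul_eq_one.mp (hfree _ x hfix)]

def ZMod.doubleHom (k : ℕ) : ZMod k →+ ZMod (2 * k) :=
  ZMod.lift k ⟨zmultiplesHom _ 2, by
    simpa [mul_comm] using ZMod.natCast_self (2 * k)⟩

theorem ZMod.doubleHom_intCast (k : ℕ) (m : ℤ) : ZMod.doubleHom k m = 2 * m := by
  simp [ZMod.doubleHom, ZMod.lift_coe, mul_comm]

theorem ZMod.doubleHom_injective (k : ℕ) : Function.Injective (ZMod.doubleHom k) := by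
  refine (injective_iff_map_eq_zero _).2 fun i hi => ?_
  obtain ⟨m, rfl⟩ := ZMod.intCast_surjective i
  rw [doubleHom_intCast, ← Int.cast_ofNat, ← Int.cast_mul, ZMod.intCast_zmod_eq_zero_iff_dvd] at hi
  rw [ZMod.intCast_zmod_eq_zero_iff_dvd]
  push_cast at hi
  exact Int.dvd_of_mul_dvd_mul_left two_ne_zero hi

theorem ZMod.exists_doubleHom_eq_iff (k : ℕ) (x : ZMod (2 * k)) :
    (∃ i, ZMod.doubleHom k i = x) ↔ ZMod.castHom (dvd_mul_right 2 k) (ZMod 2) x = 0 := by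
  constructor
  · rintro ⟨i, rfl⟩
    obtain ⟨j, rfl⟩ := ZMod.intCast_surjective i
    rw [doubleHom_intCast, map_mul, map_ofNat]
    exact zero_mul _
  · obtain ⟨m, rfl⟩ := ZMod.intCast_surjective x
    rw [map_intCast, ZMod.intCast_zmod_eq_zero_iff_dvd]
    rintro ⟨j, rfl⟩
    exact ⟨j, by rw [doubleHom_intCast]; push_cast; rfl⟩

namespace DihedralGroup

variable {k : ℕ}

section AddCommGroup

variable {G : Type*} [AddCommGroup G]

-- Rotations act by `x ↦ x - ρ i`, not `x + ρ i`, to match `r i * sr j = sr (j - i)`.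
def toAffinePerm (ρ : ZMod k →+ G) (c : G) : DihedralGroup k →* Equiv.Perm G where
  toFun
    | r i => Equiv.subRight (ρ i)
    | sr i => (Equiv.neg G).trans (Equiv.addLeft (c + ρ i))
  map_one' := by rw [one_def]; ext; simp
  map_mul' := by
    rintro (i | i) (j | j) <;> ext x <;>
      simp only [r_mul_r, r_mul_sr, sr_mul_r, sr_mul_sr, Equiv.Perm.mul_apply, Equiv.subRight_apply,
        Equiv.trans_apply, Equiv.neg_apply, Equiv.coe_addLeft, map_add, map_sub] <;> abel

variable (ρ : ZMod k →+ G) (c : G)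

@[simp]
theorem toAffinePerm_r (i : ZMod k) (x : G) : toAffinePerm ρ c (r i) x = x - ρ i := rfl

@[simp]
theorem toAffinePerm_sr (i : ZMod k) (x : G) : toAffinePerm ρ c (sr i) x = c + ρ i - x :=
  (sub_eq_add_neg _ _).symm

theorem addCayleyGraph_adj_toAffinePerm {S : Set G} (hsym : ∀ s ∈ S, -s ∈ S) (hid : (0 : G) ∉ S)
    (g : DihedralGroup k) (u v : G) :
    (addCayleyGraph S hsym hid).Adj (toAffinePerm ρ c g u) (toAffinePerm ρ c g v) ↔
      (addCayleyGraph S hsym hid).Adj u v := by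
  cases g with
  | r i => simp only [addCayleyGraph_adj, toAffinePerm_r, sub_sub_sub_cancel_right]
  | sr i =>
    rw [SimpleGraph.adj_comm _ u]
    simp only [addCayleyGraph_adj, toAffinePerm_sr, sub_sub_sub_cancel_left]

end AddCommGroup

theorem eq_one_of_toAffinePerm_doubleHom_apply_eq_self {g : DihedralGroup k} {x : ZMod (2 * k)}
    (h : toAffinePerm (ZMod.doubleHom k) 1 g x = x) : g = 1 := by
  cases g with
  | r i =>
    rw [toAffinePerm_r, sub_eq_self, ← map_zero (ZMod.doubleHom k)] at h
    rw [ZMod.doubleHom_injective k h, r_zero]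
  | sr i =>
    have hi := (ZMod.exists_doubleHom_eq_iff k _).1 ⟨i, rfl⟩
    have hpar := congrArg (ZMod.castHom (dvd_mul_right 2 k) (ZMod 2)) h
    rw [toAffinePerm_sr, map_sub, map_add, map_one, hi, add_zero] at hpar
    exact ((by decide : ∀ y : ZMod 2, 1 - y ≠ y) _ hpar).elim

theorem exists_toAffinePerm_doubleHom_apply_eq (x y : ZMod (2 * k)) :
    ∃ g : DihedralGroup k, toAffinePerm (ZMod.doubleHom k) 1 g x = y := by
  set parity := ZMod.castHom (dvd_mul_right 2 k) (ZMod 2)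
  by_cases hxy : parity (x - y) = 0
  · obtain ⟨i, hi⟩ := (ZMod.exists_doubleHom_eq_iff k _).2 hxy
    exact ⟨r i, by rw [toAffinePerm_r, hi, sub_sub_cancel]⟩
  · have hsum : parity (x + y - 1) = 0 := by
      rw [show x + y - 1 = (x - y) + 2 * y - 1 by ring, map_sub, map_add, map_mul, map_ofNat,
        map_one]
      exact (by decide : ∀ a b : ZMod 2, a ≠ 0 → a + 2 * b - 1 = 0) _ _ hxy
    obtain ⟨i, hi⟩ := (ZMod.exists_doubleHom_eq_iff k _).2 hsum
    exact ⟨sr i, by rw [toAffinePerm_sr, hi]; abel⟩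

end DihedralGroup

theorem stmt0_general (k n : ℕ) (hn : n = 2 * k)
    (S : Set (ZMod n)) (hsym : ∀ s ∈ S, -s ∈ S) (hid : (0 : ZMod n) ∉ S) :
    ∃ H : Subgroup (Equiv.Perm (ZMod n)),
      (∀ g ∈ H, ∀ u v : ZMod n,
        (addCayleyGraph S hsym hid).Adj (g u) (g v) ↔ (addCayleyGraph S hsym hid).Adj u v) ∧
      Nonempty (H ≃* DihedralGroup k) ∧
      (∀ u v : ZMod n, ∃! g : H, (g : Equiv.Perm (ZMod n)) u = v) := by
  subst hn
  set φ := DihedralGroup.toAffinePerm (ZMod.doubleHom k) (1 : ZMod (2 * k))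
  have hfree : ∀ g x, φ g x = x → g = 1 := fun _ _ =>
    DihedralGroup.eq_one_of_toAffinePerm_doubleHom_apply_eq_self
  have hinj : Function.Injective φ := φ.injective_of_eq_one_of_apply_eq_self hfree 0
  refine ⟨φ.range, ?_, ⟨(MonoidHom.ofInjective hinj).symm⟩,
    φ.existsUnique_range_apply_eq hfree DihedralGroup.exists_toAffinePerm_doubleHom_apply_eq⟩
  rintro _ ⟨g, rfl⟩
  exact DihedralGroup.addCayleyGraph_adj_toAffinePerm _ _ hsym hid g

/-- Any circulant graph on `n = 2k` vertices admits a regular subgroup of automorphisms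
isomorphic to the dihedral group `D_k` of order `2k`; hence it is a Cayley graph on `D_k`. -/
theorem stmt0 (k n : ℕ) (hk : 0 < k) (hn : n = 2 * k)
    (S : Set (ZMod n)) (hsym : ∀ s ∈ S, -s ∈ S) (hid : (0 : ZMod n) ∉ S) :
    ∃ H : Subgroup (Equiv.Perm (ZMod n)),
      (∀ g ∈ H, ∀ u v : ZMod n,
        (addCayleyGraph S hsym hid).Adj (g u) (g v) ↔ (addCayleyGraph S hsym hid).Adj u v) ∧
      Nonempty (H ≃* DihedralGroup k) ∧
      (∀ u v : ZMod n, ∃! g : H, (g : Equiv.Perm (ZMod n)) u = v) :=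
  stmt0_general k n hn S hsym hid
end

section
/- Let A be an abelian group and let D = Dih(A) be the generalized dihedral group on A, realized as the semidirect product A ⋊ C₂ where the nontrivial element x of C₂ acts on A by inversion. Let S ⊆ D be closed under inversion and not contain the identity, and let Γ = Cay(D, S). Suppose there exists y ∈ xA such that for every a ∈ A, y·a ∈ S if and only if y·a⁻¹ ∈ S. Then the automorphism group of Γ contains a subgroup isomorphic to A × C₂ that acts regularly (transitively and freely) on the vertex set; consequently Γ is also a Cayley graph on the abelian group A × C₂. -/
/-- The generalized dihedral group `Dih(A)` on an abelian group `A`: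
elements `r a` form the copy of `A`, and `sr a = x * r a` lie in the coset `xA`,
where `x = sr 1` is the distinguished involution inverting `A`. -/
inductive GenDihedral (A : Type*) : Type _
  | r : A → GenDihedral A
  | sr : A → GenDihedral A

namespace GenDihedral

variable {A : Type*} [CommGroup A]

instance : One (GenDihedral A) := ⟨r 1⟩

instance : Inv (GenDihedral A) :=
  ⟨fun g => match g with
    | r a => r a⁻¹
    | sr a => sr a⟩

instance : Mul (GenDihedral A) :=
  ⟨fun g h => match g, h with
    | r a, r b => r (a * b)
    | r a, sr b => sr (b * a⁻¹)
    | sr a, r b => sr (a * b)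
    | sr a, sr b => r (b * a⁻¹)⟩

@[simp] theorem r_mul_r (a b : A) : r a * r b = r (a * b) := rfl
@[simp] theorem r_mul_sr (a b : A) : r a * sr b = sr (b * a⁻¹) := rfl
@[simp] theorem sr_mul_r (a b : A) : sr a * r b = sr (a * b) := rfl
@[simp] theorem sr_mul_sr (a b : A) : sr a * sr b = r (b * a⁻¹) := rfl
@[simp] theorem one_def : (1 : GenDihedral A) = r 1 := rfl
@[simp] theorem inv_r (a : A) : (r a)⁻¹ = r a⁻¹ := rfl
@[simp] theorem inv_sr (a : A) : (sr a)⁻¹ = sr a := rfl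

instance : Group (GenDihedral A) :=
  Group.ofLeftAxioms
    (by rintro (a | a) (b | b) (c | c) <;>
      simp [mul_assoc, mul_comm, mul_left_comm])
    (by rintro (a | a) <;> simp)
    (by rintro (a | a) <;> simp)

/-- The canonical embedding of `A` into `Dih(A)`. -/
def rHom : A →* GenDihedral A where
  toFun := r
  map_one' := rfl
  map_mul' _ _ := rfl

/-- The distinguished involution `x` of `Dih(A)`, inverting `A` by conjugation. -/
def x (A : Type*) [CommGroup A] : GenDihedral A := sr (1 : A)

/-- The coset `xA` of `A` in `Dih(A)`, i.e. the elements of `Dih(A)` outside `A`. -/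
def xA (A : Type*) [CommGroup A] : Set (GenDihedral A) :=
  {z : GenDihedral A | ∃ a : A, z = x A * rHom a}

end GenDihedral

/-- The Cayley graph `Cay(G, S)` of a group `G` with inverse-closed, identity-free
connection set `S`: vertices `u` and `v` are adjacent iff `v = s * u` for some `s ∈ S`,
i.e. iff `v * u⁻¹ ∈ S`. -/
def cayleyGraph {G : Type*} [Group G] (S : Set G) (hsym : ∀ s ∈ S, s⁻¹ ∈ S)
    (hid : (1 : G) ∉ S) : SimpleGraph G where
  Adj u v := v * u⁻¹ ∈ S
  symm := by
    constructor
    intro u v h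
    simpa [mul_inv_rev] using hsym _ h
  loopless := by
    constructor
    intro u h
    exact hid (by simpa using h)

/-! Write `y = sr c`. Conjugation by `y` inverts `A`, so the hypothesis on `y`, together with
`S = S⁻¹`, says exactly that `y` normalises `S`. Adjacency `v * u⁻¹ ∈ S` is preserved by right
multiplication by anything and by left multiplication by elements of the normaliser of `S`, so
every map `u ↦ yᵉ * u * a` (`e ∈ C₂`, `a ∈ A`) is a graph automorphism. These maps form a copy of
`A × C₂`: they are the left regular action of `A × C₂` transported along the bijection
`(a, e) ↦ yᵉ * a` from `A × C₂` onto `Dih(A)`, which also makes the action regular. -/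

open GenDihedral

theorem cayleyGraph_adj_mul_mul_iff {G : Type*} [Group G] {S : Set G}
    (hsym : ∀ s ∈ S, s⁻¹ ∈ S) (hid : (1 : G) ∉ S) {g : G} (hg : g ∈ Subgroup.normalizer S)
    (h u v : G) :
    (cayleyGraph S hsym hid).Adj (g * u * h) (g * v * h) ↔ (cayleyGraph S hsym hid).Adj u v := by
  change g * v * h * (g * u * h)⁻¹ ∈ S ↔ v * u⁻¹ ∈ S
  rw [hg (v * u⁻¹)]
  group

def zmodPowersHom {G : Type*} [Group G] (n : ℕ) [NeZero n] {y : G} (hy : y ^ n = 1) :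
    Multiplicative (ZMod n) →* G where
  toFun e := y ^ (Multiplicative.toAdd e).val
  map_one' := by rw [toAdd_one, ZMod.val_zero, pow_zero]
  map_mul' e d := by simp only [toAdd_mul, ZMod.val_add, ← pow_eq_pow_mod _ hy, ← pow_add]

theorem Multiplicative.zmodTwo_eq_one_or_ofAdd_one (e : Multiplicative (ZMod 2)) :
    e = 1 ∨ e = .ofAdd 1 := by
  revert e
  decide

namespace GenDihedral

variable {A : Type*} [CommGroup A]

theorem mem_xA_iff {y : GenDihedral A} : y ∈ xA A ↔ ∃ c, y = sr c := by
  simp [xA, x, rHom]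

theorem mem_normalizer_of_mem_xA {S : Set (GenDihedral A)} (hsym : ∀ s ∈ S, s⁻¹ ∈ S)
    {y : GenDihedral A} (hy : y ∈ xA A)
    (hS : ∀ a : A, y * rHom a ∈ S ↔ y * (rHom a)⁻¹ ∈ S) : y ∈ Subgroup.normalizer S := by
  obtain ⟨c, rfl⟩ := mem_xA_iff.1 hy
  have hinv (s : GenDihedral A) : s⁻¹ ∈ S ↔ s ∈ S := ⟨fun h => inv_inv s ▸ hsym _ h, hsym s⟩
  rw [Subgroup.mem_set_normalizer_iff']
  rintro (a | d)
  · simpa [rHom, mul_comm] using (hS a).symm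
  · simpa using (hinv (r (c * d⁻¹))).symm

theorem sr_pow_two (c : A) : sr c ^ 2 = 1 := by simp [sq]

abbrev srPowersHom (c : A) : Multiplicative (ZMod 2) →* GenDihedral A :=
  zmodPowersHom 2 (sr_pow_two c)

@[simp] theorem srPowersHom_ofAdd_one (c : A) : srPowersHom c (.ofAdd 1) = sr c := pow_one _

def prodEquiv (c : A) : A × Multiplicative (ZMod 2) ≃ GenDihedral A where
  toFun p := srPowersHom c p.2 * r p.1
  invFun
    | r a => (a, 1)
    | sr d => (c⁻¹ * d, .ofAdd 1)
  left_inv := by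
    rintro ⟨a, e⟩
    rcases e.zmodTwo_eq_one_or_ofAdd_one with rfl | rfl <;> simp
  right_inv := by
    rintro (a | d) <;> simp

@[simp] theorem prodEquiv_apply (c a : A) (e : Multiplicative (ZMod 2)) :
    prodEquiv c (a, e) = srPowersHom c e * r a := rfl

def regularRep (c : A) : A × Multiplicative (ZMod 2) →* Equiv.Perm (GenDihedral A) :=
  (prodEquiv c).permCongrHom.toMonoidHom.comp (MulAction.toPermHom _ _)

theorem regularRep_apply_eq_prodEquiv (c : A) (p : A × Multiplicative (ZMod 2))
    (u : GenDihedral A) : regularRep c p u = prodEquiv c (p * (prodEquiv c).symm u) := rfl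

theorem regularRep_apply (c a : A) (e : Multiplicative (ZMod 2)) (u : GenDihedral A) :
    regularRep c (a, e) u = srPowersHom c e * u * r a := by
  obtain ⟨⟨b, k⟩, rfl⟩ := (prodEquiv c).surjective u
  rw [regularRep_apply_eq_prodEquiv, Equiv.symm_apply_apply]
  simp [mul_assoc, mul_comm a b]

theorem existsUnique_regularRep_apply_eq (c : A) (u v : GenDihedral A) :
    ∃! p, regularRep c p u = v := by
  refine ⟨(prodEquiv c).symm v * ((prodEquiv c).symm u)⁻¹, ?_,
    fun p (hp : regularRep c p u = v) => ?_⟩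
  · beta_reduce
    rw [regularRep_apply_eq_prodEquiv, inv_mul_cancel_right, Equiv.apply_symm_apply]
  · rw [regularRep_apply_eq_prodEquiv] at hp
    rw [eq_mul_inv_iff_mul_eq, ← hp, Equiv.symm_apply_apply]

theorem regularRep_injective (c : A) : Function.Injective (regularRep c) := fun p q h =>
  (existsUnique_regularRep_apply_eq c 1 (regularRep c q 1)).unique (by rw [h]) rfl

end GenDihedral

/-- If `S` is an inverse-closed, identity-free connection set on the generalized
dihedral group `Dih(A)` and some `y ∈ xA` satisfies `y * a ∈ S ↔ y * a⁻¹ ∈ S` for all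
`a ∈ A`, then `Aut(Cay(Dih(A), S))` contains a regular subgroup isomorphic to
`A × C₂`; hence the graph is also a Cayley graph on the abelian group `A × C₂`. -/
theorem stmt3 {A : Type*} [CommGroup A]
    (S : Set (GenDihedral A)) (hsym : ∀ s ∈ S, s⁻¹ ∈ S) (hid : (1 : GenDihedral A) ∉ S)
    (y : GenDihedral A) (hy : y ∈ GenDihedral.xA A)
    (hS : ∀ a : A, y * GenDihedral.rHom a ∈ S ↔ y * (GenDihedral.rHom a)⁻¹ ∈ S) :
    ∃ H : Subgroup (Equiv.Perm (GenDihedral A)),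
      (∀ g ∈ H, ∀ u v : GenDihedral A,
        (cayleyGraph S hsym hid).Adj (g u) (g v) ↔ (cayleyGraph S hsym hid).Adj u v) ∧
      Nonempty (H ≃* A × Multiplicative (ZMod 2)) ∧
      (∀ u v : GenDihedral A, ∃! g : H, (g : Equiv.Perm (GenDihedral A)) u = v) := by
  have hnorm : y ∈ Subgroup.normalizer S := mem_normalizer_of_mem_xA hsym hy hS
  obtain ⟨c, rfl⟩ := mem_xA_iff.1 hy
  refine ⟨(regularRep c).range, ?_, ⟨(MonoidHom.ofInjective (regularRep_injective c)).symm⟩, ?_⟩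
  · rintro _ ⟨⟨a, e⟩, rfl⟩ u v
    rw [regularRep_apply, regularRep_apply]
    exact cayleyGraph_adj_mul_mul_iff hsym hid (pow_mem hnorm _) _ u v
  · intro u v
    obtain ⟨p, hp, huniq⟩ := existsUnique_regularRep_apply_eq c u v
    refine ⟨⟨regularRep c p, p, rfl⟩, hp, ?_⟩
    rintro ⟨_, q, rfl⟩ hq
    exact Subtype.ext (congrArg (regularRep c) (huniq q hq))
end

section
/- Let A be an abelian group, let D = Dih(A) be the generalized dihedral group on A with distinguished involution x, and fix y ∈ xA. For each a ∈ A define the permutation α_a of D by α_a(z) = z·a, and define β : D → D by β(z) = y·z. Then β commutes with α_a for every a ∈ A, and the subgroup of Sym(D) generated by {α_a : a ∈ A} together with β is an abelian group isomorphic to A × C₂ that acts regularly (transitively and freely) on D. -/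
open Equiv Subgroup

section ZModPow

variable {M : Type*} [Monoid M] {n : ℕ} [NeZero n]

def zmodPowHom (y : M) (hy : y ^ n = 1) : Multiplicative (ZMod n) →* M where
  toFun k := y ^ k.toAdd.val
  map_one' := by simp
  map_mul' a b := by simp only [toAdd_mul, ZMod.val_add, pow_add, ← pow_eq_pow_mod _ hy]

@[simp]
theorem zmodPowHom_apply (y : M) (hy : y ^ n = 1) (k : Multiplicative (ZMod n)) :
    zmodPowHom y hy k = y ^ k.toAdd.val := rfl

theorem range_zmodPowHom {G : Type*} [Group G] (y : G) (hy : y ^ n = 1) :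
    (zmodPowHom y hy).range = zpowers y := by
  refine le_antisymm ?_ (zpowers_le.mpr ⟨.ofAdd 1, ?_⟩)
  · rintro - ⟨k, rfl⟩
    exact pow_mem (mem_zpowers y) _
  · rw [zmodPowHom_apply, toAdd_ofAdd, ZMod.val_one_eq_one_mod, ← pow_eq_pow_mod _ hy, pow_one]

end ZModPow

section Translations

variable {G A : Type*} [Group G] [CommGroup A] (f : A →* G)

def rightTranslationHom : A →* Perm G where
  toFun a := Equiv.mulRight (f a)
  map_one' := by ext; simp
  map_mul' a b := by ext z; simp [mul_comm a b, mul_assoc]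

@[simp]
theorem rightTranslationHom_apply (a : A) (z : G) : rightTranslationHom f a z = z * f a := rfl

theorem commute_toPerm_rightTranslationHom (y : G) (a : A) :
    Commute (MulAction.toPerm y) (rightTranslationHom f a) := by
  ext z; simp [mul_assoc]

variable (y : G) (hy : y ^ 2 = 1)

def translationHom : A × Multiplicative (ZMod 2) →* Perm G :=
  (rightTranslationHom f).noncommCoprod ((MulAction.toPermHom G G).comp (zmodPowHom y hy))
    fun a k => (commute_toPerm_rightTranslationHom f _ a).symm

theorem translationHom_apply (p : A × Multiplicative (ZMod 2)) (z : G) :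
    translationHom f y hy p z = y ^ p.2.toAdd.val * z * f p.1 :=
  rfl

theorem range_translationHom :
    (translationHom f y hy).range =
      closure (Set.range (rightTranslationHom f) ∪ {MulAction.toPerm y}) := by
  refine (MonoidHom.noncommCoprod_range _ _ _).trans ?_
  rw [Subgroup.closure_union, ← MonoidHom.coe_range, closure_eq, ← zpowers_eq_closure,
    MonoidHom.range_comp, range_zmodPowHom, MonoidHom.map_zpowers]
  rfl

variable {f y}

theorem translationHom_injective (hf : Function.Injective f) (hyf : y ∉ f.range) :
    Function.Injective (translationHom f y hy) := by
  rw [injective_iff_map_eq_one]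
  rintro ⟨a, k⟩ h
  have h1 : y ^ k.toAdd.val * f a = 1 := by
    simpa [translationHom_apply] using congr($h 1)
  have hk : k.toAdd.val < 2 := ZMod.val_lt _
  interval_cases hval : k.toAdd.val
  · rw [pow_zero, one_mul, ← map_one f] at h1
    rw [hf h1, Prod.mk_eq_one]
    exact ⟨rfl, ZMod.val_eq_zero _ |>.mp hval⟩
  · exact absurd ⟨a⁻¹, by rw [map_inv, ← eq_inv_of_mul_eq_one_left h1, pow_one]⟩ hyf

theorem exists_translationHom_apply_one_eq (hindex : f.range.index = 2) (hyf : y ∉ f.range)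
    (z : G) : ∃ p, translationHom f y hy p 1 = z := by
  by_cases hz : z ∈ f.range
  · obtain ⟨a, rfl⟩ := hz
    exact ⟨(a, 1), by simp [translationHom_apply]⟩
  · obtain ⟨a, ha⟩ : y * z ∈ f.range :=
      (mul_mem_iff_of_index_two hindex).mpr (iff_of_false hyf hz)
    refine ⟨(a, .ofAdd 1), ?_⟩
    rw [translationHom_apply, mul_one, ha, toAdd_ofAdd, ZMod.val_one, pow_one, ← mul_assoc,
      ← sq, hy, one_mul]

end Translations

theorem Equiv.Perm.existsUnique_apply_eq_of_commute {X : Type*} {H : Subgroup (Perm X)}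
    (hcomm : ∀ g h : H, g * h = h * g) (x₀ : X)
    (htrans : ∀ v, ∃ g : H, (g : Perm X) x₀ = v) (u v : X) :
    ∃! g : H, (g : Perm X) u = v := by
  have htrans' (u v : X) : ∃ g : H, (g : Perm X) u = v := by
    obtain ⟨gu, rfl⟩ := htrans u
    obtain ⟨gv, rfl⟩ := htrans v
    exact ⟨gv * gu⁻¹, by simp⟩
  obtain ⟨g, hg⟩ := htrans' u v
  refine ⟨g, hg, fun g' hg' => Subtype.ext <| Equiv.ext fun w => ?_⟩
  obtain ⟨h, rfl⟩ := htrans' u w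
  calc (g' : Perm X) ((h : Perm X) u) = (h : Perm X) ((g' : Perm X) u) :=
        congr(($(hcomm g' h) : Perm X) u)
    _ = (h : Perm X) ((g : Perm X) u) := by rw [hg', hg]
    _ = (g : Perm X) ((h : Perm X) u) := congr(($(hcomm h g) : Perm X) u)

namespace GenDihedral

variable {A : Type*} [CommGroup A]

theorem rHom_injective : Function.Injective (rHom : A →* GenDihedral A) :=
  fun _ _ h => r.inj h

theorem index_range_rHom : (rHom : A →* GenDihedral A).range.index = 2 := by
  refine index_eq_two_iff_exists_notMem_and'.mpr ⟨x A, ?_, ?_⟩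
  · rintro ⟨a, ha⟩
    cases ha
  · rintro (b | b)
    · exact .inr ⟨b, rfl⟩
    · exact .inl ⟨b, by simp [x, rHom]⟩

theorem sq_eq_one_of_mem_xA {y : GenDihedral A} (hy : y ∈ xA A) : y ^ 2 = 1 := by
  obtain ⟨a, rfl⟩ := hy
  simp [x, rHom, sq]

theorem notMem_range_rHom_of_mem_xA {y : GenDihedral A} (hy : y ∈ xA A) :
    y ∉ (rHom : A →* GenDihedral A).range := by
  obtain ⟨a, rfl⟩ := hy
  rintro ⟨b, hb⟩
  cases hb

end GenDihedral

/-- For `y ∈ xA`, the right translations `α_a(z) = z * a` (for `a ∈ A`) and the left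
translation `β(z) = y * z` commute, and together they generate an abelian subgroup of
`Sym(Dih(A))` isomorphic to `A × C₂` acting regularly on `Dih(A)`. -/
theorem stmt8 {A : Type*} [CommGroup A] (y : GenDihedral A) (hy : y ∈ GenDihedral.xA A)
    (α : A → Equiv.Perm (GenDihedral A))
    (hα : ∀ (a : A) (z : GenDihedral A), α a z = z * GenDihedral.rHom a)
    (β : Equiv.Perm (GenDihedral A)) (hβ : ∀ z : GenDihedral A, β z = y * z) :
    (∀ a : A, β * α a = α a * β) ∧
    (∀ g h : ↥(Subgroup.closure (Set.range α ∪ {β})), g * h = h * g) ∧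
    Nonempty (↥(Subgroup.closure (Set.range α ∪ {β})) ≃* A × Multiplicative (ZMod 2)) ∧
    (∀ u v : GenDihedral A, ∃! g : ↥(Subgroup.closure (Set.range α ∪ {β})),
      (g : Equiv.Perm (GenDihedral A)) u = v) := by
  open GenDihedral in
  have hα' : α = rightTranslationHom rHom := funext fun a => Equiv.ext (hα a)
  have hβ' : β = MulAction.toPerm y := Equiv.ext hβ
  subst hα' hβ'
  set φ := translationHom rHom y (sq_eq_one_of_mem_xA hy)
  have hrange :
      closure (Set.range (rightTranslationHom rHom) ∪ {MulAction.toPerm y}) = φ.range :=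
    (range_translationHom _ _ _).symm
  let e := (MulEquiv.subgroupCongr hrange).trans
    (MonoidHom.ofInjective (translationHom_injective _ rHom_injective
      (notMem_range_rHom_of_mem_xA hy))).symm
  have hcomm : ∀ g h : closure (Set.range (rightTranslationHom rHom) ∪ {MulAction.toPerm y}),
      g * h = h * g := fun g h => e.injective (by rw [map_mul, map_mul, mul_comm])
  refine ⟨fun a => (commute_toPerm_rightTranslationHom _ y a).eq, hcomm, ⟨e⟩,
    Equiv.Perm.existsUnique_apply_eq_of_commute hcomm 1 fun v => ?_⟩
  obtain ⟨p, hp⟩ := exists_translationHom_apply_one_eq _ index_range_rHom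
    (notMem_range_rHom_of_mem_xA hy) v
  exact ⟨⟨φ p, hrange ▸ ⟨p, rfl⟩⟩, hp⟩
end
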